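/- Let M be a model based on a weakly transitive frame, e and p propositional variables, and x a point with M,x ⊨ ◇◇p ∧ ¬◇p. Then: (1) x is irreflexive (not xRx); (2) M,x ⊨ p; (3) there exists y ≠ x with xRy and yRx, so the cluster C(x) contains at least two points. Moreover, if additionally M,x ⊨ □(e → ◇p), then every point y with xRy and M,y ⊨ e belongs to C(x). -/

import Mathlib

/-- Modal formulas built from propositional variables (indexed by ℕ),
constants ⊤, ⊥, negation, conjunction and the modal operator ◇. -/
inductive MF : Type where
  | var : ℕ → MF
  | top : MF
  | bot : MF
  | neg : MF → MF
  | and : MF → MF → MF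
  | dia : MF → MF
deriving DecidableEq

namespace MF

/-- Disjunction, as an abbreviation. -/
def or (a b : MF) : MF := neg (and (neg a) (neg b))

/-- Implication, as an abbreviation. -/
def imp (a b : MF) : MF := MF.or (neg a) b

/-- Box, as an abbreviation: □φ := ¬◇¬φ. -/
def box (a : MF) : MF := neg (dia (neg a))

/-- The (finite) set of propositional variables occurring in a formula. -/
def sig : MF → Finset ℕ
  | var n => {n}
  | top => ∅
  | bot => ∅
  | neg a => a.sig
  | and a b => a.sig ∪ b.sig
  | dia a => a.sig

/-- The set of subformulas of a formula. -/
def subf : MF → Finset MF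
  | var n => {var n}
  | top => {top}
  | bot => {bot}
  | neg a => insert (neg a) (subf a)
  | and a b => insert (and a b) (subf a ∪ subf b)
  | dia a => insert (dia a) (subf a)

/-- The number of subformulas of a formula. -/
def nsub (a : MF) : ℕ := (subf a).card

end MF

/-- A Kripke model: a binary (accessibility) relation on worlds together with
a valuation assigning to each propositional variable a set of worlds. -/
structure KModel (W : Type) where
  R : W → W → Prop
  val : ℕ → W → Prop

/-- Weak transitivity: xRy and yRz imply x = z or xRz. -/
def WTrans {W : Type} (R : W → W → Prop) : Prop :=
  ∀ x y z : W, R x y → R y z → x = z ∨ R x z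

/-- The usual Kripke truth relation. -/
def Sat {W : Type} (M : KModel W) : W → MF → Prop
  | x, .var n => M.val n x
  | _, .top => True
  | _, .bot => False
  | x, .neg a => ¬ Sat M x a
  | x, .and a b => Sat M x a ∧ Sat M x b
  | x, .dia a => ∃ y, M.R x y ∧ Sat M y a

/-- wK4-validity: truth at every point of every model based on a weakly
transitive frame. -/
def WK4Valid (φ : MF) : Prop :=
  ∀ (W : Type) (M : KModel W), WTrans M.R → ∀ x : W, Sat M x φ

/-- The cluster of a point x: C(x) = {x} ∪ {y | xRy and yRx}. -/
def cluster {W : Type} (R : W → W → Prop) (x : W) : Set W :=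
  {x} ∪ {y | R x y ∧ R y x}

/-- C R C' for sets of points: xRy for some x ∈ C, y ∈ C'. -/
def clusterRel {W : Type} (R : W → W → Prop) (C C' : Set W) : Prop :=
  ∃ x ∈ C, ∃ y ∈ C', R x y

/-- C R y for a set C and point y: xRy for some x ∈ C. -/
def clusterRelPt {W : Type} (R : W → W → Prop) (C : Set W) (y : W) : Prop :=
  ∃ x ∈ C, R x y

/-- C R^s C': C R C' and C ≠ C'. -/
def clusterRelS {W : Type} (R : W → W → Prop) (C C' : Set W) : Prop :=
  clusterRel R C C' ∧ C ≠ C'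

/-- A set is a cluster if it is the cluster of some point. -/
def IsCluster {W : Type} (R : W → W → Prop) (C : Set W) : Prop :=
  ∃ x : W, C = cluster R x

/-- A σ-model is descriptive if it satisfies (dif), (ref) and (com). -/
def Descriptive {W : Type} (σ : Finset ℕ) (M : KModel W) : Prop :=
  (∀ x y : W, (∀ φ : MF, φ.sig ⊆ σ → (Sat M x φ ↔ Sat M y φ)) → x = y) ∧
  (∀ x y : W, M.R x y ↔ ∀ χ : MF, χ.sig ⊆ σ → Sat M y χ → Sat M x (MF.dia χ)) ∧
  (∀ Γ : Set MF, (∀ φ ∈ Γ, φ.sig ⊆ σ) →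
    (∀ Γ' : Finset MF, ↑Γ' ⊆ Γ → ∃ x : W, ∀ φ ∈ Γ', Sat M x φ) →
    ∃ x : W, ∀ φ ∈ Γ, Sat M x φ)

/-- The ρ-type of a point: the set of all ρ-formulas true at it. -/
def rType {W : Type} (M : KModel W) (ρ : Finset ℕ) (x : W) : Set MF :=
  {φ : MF | φ.sig ⊆ ρ ∧ Sat M x φ}

/-- A cluster C is ρ-maximal if whenever C R y and some x ∈ C has the same
ρ-type as y, then y ∈ C. -/
def RhoMaximal {W : Type} (M : KModel W) (ρ : Finset ℕ) (C : Set W) : Prop :=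
  ∀ x ∈ C, ∀ y : W, clusterRelPt M.R C y → rType M ρ x = rType M ρ y → y ∈ C

/-- β is a ρ-bisimulation between M1 and M2: conditions (atom) and (move). -/
def IsBisim {W1 W2 : Type} (ρ : Finset ℕ) (M1 : KModel W1) (M2 : KModel W2)
    (β : W1 → W2 → Prop) : Prop :=
  ∀ x1 x2, β x1 x2 →
    (∀ n ∈ ρ, M1.val n x1 ↔ M2.val n x2) ∧
    (∀ y1, M1.R x1 y1 → ∃ y2, M2.R x2 y2 ∧ β y1 y2) ∧
    (∀ y2, M2.R x2 y2 → ∃ y1, M1.R x1 y1 ∧ β y1 y2)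

/-- M1,x1 ∼ρ M2,x2 : some ρ-bisimulation relates x1 to x2. -/
def Bisimilar {W1 W2 : Type} (ρ : Finset ℕ) (M1 : KModel W1) (x1 : W1)
    (M2 : KModel W2) (x2 : W2) : Prop :=
  ∃ β : W1 → W2 → Prop, IsBisim ρ M1 M2 β ∧ β x1 x2

section WeakTransitivity

variable {W : Type} {M : KModel W}

theorem sat_box_imp_iff {x : W} {φ ψ : MF} :
    Sat M x (MF.box (MF.imp φ ψ)) ↔ ∀ y, M.R x y → Sat M y φ → Sat M y ψ := by
  simp [MF.box, MF.imp, MF.or, Sat]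

/-- The φ-witness z of y cannot be an R-successor of x, so weak transitivity forces z = x. -/
theorem WTrans.rel_and_sat_of_sat_dia_of_not_sat_dia (hw : WTrans M.R) {x y : W} {φ : MF}
    (hxy : M.R x y) (hy : Sat M y (MF.dia φ)) (hx : ¬ Sat M x (MF.dia φ)) :
    M.R y x ∧ Sat M x φ := by
  obtain ⟨z, hyz, hz⟩ := hy
  obtain rfl : x = z := (hw x y z hxy hyz).resolve_right fun hxz => hx ⟨z, hxz, hz⟩
  exact ⟨hyz, hz⟩

end WeakTransitivity

/-- If M,x ⊨ ◇◇p ∧ ¬◇p in a model on a weakly transitive frame, then x is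
irreflexive, p holds at x, and C(x) contains a second point; moreover, if
also M,x ⊨ □(e → ◇p), then every R-successor of x satisfying e lies in C(x). -/
theorem stmt19 {W : Type} (M : KModel W) (hw : WTrans M.R) (e p : ℕ) (x : W)
    (h : Sat M x (MF.and (MF.dia (MF.dia (MF.var p)))
      (MF.neg (MF.dia (MF.var p))))) :
    (¬ M.R x x) ∧
    Sat M x (MF.var p) ∧
    (∃ y : W, y ≠ x ∧ M.R x y ∧ M.R y x) ∧
    (Sat M x (MF.box (MF.imp (MF.var e) (MF.dia (MF.var p)))) →
      ∀ y : W, M.R x y → Sat M y (MF.var e) → y ∈ cluster M.R x) := by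
  obtain ⟨⟨y, hxy, hy⟩, hx⟩ := h
  obtain ⟨hyx, hpx⟩ := hw.rel_and_sat_of_sat_dia_of_not_sat_dia hxy hy hx
  have hirr : ¬ M.R x x := fun hxx => hx ⟨x, hxx, hpx⟩
  refine ⟨hirr, hpx, ⟨y, fun hyx_eq => hirr (hyx_eq ▸ hxy), hxy, hyx⟩, ?_⟩
  intro hbox z hxz hez
  exact Or.inr ⟨hxz, (hw.rel_and_sat_of_sat_dia_of_not_sat_dia hxz
    (sat_box_imp_iff.mp hbox z hxz hez) hx).1⟩
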